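/- Let M be an internally 4-connected binary matroid in which every element is in exactly three triangles. Then M has no cocircuit of odd size. -/

import Mathlib

open Set Matroid

namespace Paper

variable {α : Type*}

/-- A circuit of a matroid: a minimal dependent set. -/
def Circuit (M : Matroid α) (C : Set α) : Prop :=
  C ⊆ M.E ∧ ¬ M.Indep C ∧ ∀ D, D ⊂ C → M.Indep D

/-- A cocircuit: a circuit of the dual matroid. -/
def Cocircuit (M : Matroid α) (C : Set α) : Prop := Circuit M✶ C

/-- A triangle: a 3-element circuit. -/
def IsTriangle (M : Matroid α) (T : Set α) : Prop := Circuit M T ∧ T.encard = 3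

/-- A triad: a 3-element cocircuit. -/
def IsTriad (M : Matroid α) (T : Set α) : Prop := Cocircuit M T ∧ T.encard = 3

/-- The (extended) rank of a set: the supremum of the cardinalities of
independent subsets. -/
noncomputable def eRank (M : Matroid α) (X : Set α) : ℕ∞ :=
  ⨆ I ∈ {I : Set α | M.Indep I ∧ I ⊆ X}, I.encard

/-- The rank of the matroid. -/
noncomputable def eRk (M : Matroid α) : ℕ∞ := eRank M M.E

/-- `(X, Y)` is a `k`-separation of `M`: a partition of the ground set into
two sets, each of size at least `k`, with `λ(X) = r(X) + r(Y) - r(M) ≤ k - 1`. -/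
def IsKSeparation (M : Matroid α) (k : ℕ) (X Y : Set α) : Prop :=
  Disjoint X Y ∧ X ∪ Y = M.E ∧
    eRank M X + eRank M Y ≤ eRk M + ((k - 1 : ℕ) : ℕ∞) ∧
    (k : ℕ∞) ≤ X.encard ∧ (k : ℕ∞) ≤ Y.encard

/-- `M` is `n`-connected if it has no `k`-separation for any positive `k < n`. -/
def NConnected (M : Matroid α) (n : ℕ) : Prop :=
  ∀ k, 1 ≤ k → k < n → ∀ X Y, ¬ IsKSeparation M k X Y

/-- `M` is internally 4-connected if it is 3-connected and every
3-separation has a side that is a triangle or a triad. -/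
def InternallyFourConnected (M : Matroid α) : Prop :=
  NConnected M 3 ∧ ∀ X Y, IsKSeparation M 3 X Y →
    IsTriangle M X ∨ IsTriad M X ∨ IsTriangle M Y ∨ IsTriad M Y

/-- `M` is binary: representable over `GF(2)`. -/
def Binary (M : Matroid α) : Prop :=
  ∃ φ : α → (α →₀ ZMod 2), ∀ I, I ⊆ M.E →
    (M.Indep I ↔ LinearIndependent (ZMod 2) (fun x : I => φ x.1))

/-- Every element of `M` is in exactly three triangles. -/
def EveryElementInThreeTriangles (M : Matroid α) : Prop :=
  ∀ e ∈ M.E, {T : Set α | IsTriangle M T ∧ e ∈ T}.encard = 3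

/-- Deletion of a set of elements. -/
def delete (M : Matroid α) (D : Set α) : Matroid α := M ↾ (M.E \ D)

/-- Contraction of a set of elements. -/
def contract (M : Matroid α) (C : Set α) : Matroid α := (delete M✶ C)✶

/-- A nonloop. -/
def Nonloop (M : Matroid α) (e : α) : Prop := M.Indep {e}

/-- `N` is a simplification of `M`: the restriction of `M` to a set of
nonloops containing exactly one element from each parallel class. -/
def IsSimplificationOf (N M : Matroid α) : Prop :=
  ∃ S, S ⊆ M.E ∧ N = M ↾ S ∧ (∀ e ∈ S, Nonloop M e) ∧
    ∀ f, Nonloop M f → ∃! e, e ∈ S ∧ M.closure {e} = M.closure {f}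

/-- `si(M/e)` is internally 4-connected. -/
def SiContractI4C (M : Matroid α) (e : α) : Prop :=
  ∀ N, IsSimplificationOf N (contract M {e}) → InternallyFourConnected N

/-- A set is fully closed if it is closed in `M` and in `M✶`. -/
def FullyClosed (M : Matroid α) (F : Set α) : Prop :=
  M.closure F = F ∧ M✶.closure F = F

/-- The full closure of a set: the intersection of all fully closed sets
containing it. -/
def fcl (M : Matroid α) (Z : Set α) : Set α := ⋂₀ {F | Z ⊆ F ∧ FullyClosed M F}

/-- An exact 4-separation: a 4-separation with `λ = 3`. -/
def IsExact4Separation (M : Matroid α) (X Y : Set α) : Prop :=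
  Disjoint X Y ∧ X ∪ Y = M.E ∧
    eRank M X + eRank M Y = eRk M + 3 ∧
    (4 : ℕ∞) ≤ X.encard ∧ (4 : ℕ∞) ≤ Y.encard

/-! In a binary matroid a circuit meets a cocircuit `K` in an even number of elements: modulo the
span of the hyperplane `E \ K`, all elements of `K` represent one and the same nonzero vector,
while the vectors of a circuit sum to zero. So every triangle meets `K` in `0` or `2` elements,
and counting the incidences between `K` and the triangles meeting it gives
`3 |K| = 2 · #{triangles meeting K}`; hence `|K|` is even. -/

variable {M : Matroid α} {C K T X : Set α} {e : α}

lemma circuit_iff_isCircuit : Circuit M C ↔ M.IsCircuit C := by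
  rw [isCircuit_iff_forall_ssubset, Dep, Circuit]
  tauto

lemma cocircuit_iff_isCocircuit : Cocircuit M K ↔ M.IsCocircuit K :=
  circuit_iff_isCircuit

lemma _root_.Matroid.IsCocircuit.spanning_insert_compl (hK : M.IsCocircuit K) (he : e ∈ K) :
    M.Spanning (insert e (M.E \ K)) := by
  have h := (isCocircuit_iff_minimal_compl_nonspanning.1 hK).not_prop_of_ssubset
    (sdiff_singleton_ssubset.2 he)
  rwa [not_not, sdiff_sdiff_eq_sdiff_union (singleton_subset_iff.2 (hK.subset_ground he)),
    union_singleton] at h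

lemma _root_.Matroid.IsCocircuit.notMem_closure_compl (hK : M.IsCocircuit K) (he : e ∈ K) :
    e ∉ M.closure (M.E \ K) := fun hcl ↦ by
  have hsp := hK.spanning_insert_compl he
  rw [spanning_iff_closure_eq, closure_insert_eq_of_mem_closure hcl,
    ← spanning_iff_closure_eq] at hsp
  exact (isCocircuit_iff_minimal_compl_nonspanning.1 hK).prop hsp

lemma ncard_mul_eq_ncard_mul_of_forall {P : Set α → Prop} (hK : K.Finite) {m n : ℕ}
    (hm : ∀ e ∈ K, {T | P T ∧ e ∈ T}.encard = m)
    (hn : ∀ T, P T → (T ∩ K).Nonempty → (T ∩ K).ncard = n) :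
    K.ncard * m = {T | P T ∧ (T ∩ K).Nonempty}.ncard * n := by
  classical
  have hfin : ∀ e ∈ K, {T | P T ∧ e ∈ T}.Finite := fun e he ↦ finite_of_encard_eq_coe (hm e he)
  have h𝒯 : {T | P T ∧ (T ∩ K).Nonempty}.Finite :=
    (hK.biUnion hfin).subset fun T ⟨hT, e, heT, heK⟩ ↦ mem_biUnion heK ⟨hT, heT⟩
  rw [ncard_eq_toFinset_card _ hK, ncard_eq_toFinset_card _ h𝒯]
  refine Finset.card_mul_eq_card_mul (· ∈ ·) (fun e he ↦ ?_) (fun T hT ↦ ?_)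
  · rw [hK.mem_toFinset] at he
    have hcoe : (h𝒯.toFinset.bipartiteAbove (· ∈ ·) e : Set (Set α)) = {T | P T ∧ e ∈ T} := by
      ext T
      simp only [Finset.coe_bipartiteAbove, Finite.mem_toFinset, mem_ofPred_eq]
      exact ⟨fun h ↦ ⟨h.1.1, h.2⟩, fun h ↦ ⟨⟨h.1, e, h.2, he⟩, h.2⟩⟩
    rw [← ENat.natCast_inj, ← encard_coe_eq_coe_finsetCard, hcoe, hm e he]
  · rw [h𝒯.mem_toFinset] at hT
    rw [← hn T hT.1 hT.2, ← ncard_coe_finset, Finset.coe_bipartiteBelow, inter_comm]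
    simp only [Finite.mem_toFinset]
    rfl

lemma zmod_two_eq_zero_or_eq_one (a : ZMod 2) : a = 0 ∨ a = 1 := by
  decide +revert

lemma linearIndepOn_zmod_two_iff {ι V : Type*} [AddCommGroup V] [Module (ZMod 2) V]
    {v : ι → V} {s : Set ι} :
    LinearIndepOn (ZMod 2) v s ↔ ∀ t : Finset ι, ↑t ⊆ s → ∑ i ∈ t, v i = 0 → t = ∅ := by
  classical
  rw [linearIndepOn_iff']
  refine ⟨fun h t hts h0 ↦ Finset.eq_empty_of_forall_notMem fun i hi ↦
    one_ne_zero (h t 1 hts (by simpa using h0) i hi), fun h t g hts h0 i hi ↦ by_contra fun hgi ↦ ?_⟩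
  have hsupp : ∑ j ∈ t with g j ≠ 0, v j = 0 := by
    rw [Finset.sum_filter]
    refine (Finset.sum_congr rfl fun j _ ↦ ?_).trans h0
    obtain hj | hj := zmod_two_eq_zero_or_eq_one (g j) <;> simp [hj]
  have hi' : i ∈ {j ∈ t | g j ≠ 0} := Finset.mem_filter.2 ⟨hi, hgi⟩
  rw [h _ ((Finset.coe_subset.2 (Finset.filter_subset _ t)).trans hts) hsupp] at hi'
  exact Finset.notMem_empty i hi'

def IsRep (𝔽 : Type*) {V : Type*} [DivisionRing 𝔽] [AddCommGroup V] [Module 𝔽 V]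
    (M : Matroid α) (φ : α → V) : Prop :=
  ∀ I, I ⊆ M.E → (M.Indep I ↔ LinearIndepOn 𝔽 φ I)

section Representation

variable {𝔽 V : Type*} [DivisionRing 𝔽] [AddCommGroup V] [Module 𝔽 V] {φ : α → V}

lemma IsRep.mem_closure_iff_of_indep (hφ : IsRep 𝔽 M φ) {I : Set α} (hI : M.Indep I)
    (he : e ∈ M.E) : e ∈ M.closure I ↔ φ e ∈ Submodule.span 𝔽 (φ '' I) := by
  by_cases heI : e ∈ I
  · exact iff_of_true (M.mem_closure_of_mem heI) (Submodule.subset_span (mem_image_of_mem φ heI))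
  rw [← not_iff_not, hI.notMem_closure_iff_of_notMem heI, hφ _ (insert_subset he hI.subset_ground),
    linearIndepOn_insert heI, and_iff_right ((hφ I hI.subset_ground).1 hI)]

lemma IsRep.mem_closure_iff (hφ : IsRep 𝔽 M φ) (hX : X ⊆ M.E) (he : e ∈ M.E) :
    e ∈ M.closure X ↔ φ e ∈ Submodule.span 𝔽 (φ '' X) := by
  obtain ⟨I, hI⟩ := M.exists_isBasis X
  have hspan : Submodule.span 𝔽 (φ '' X) = Submodule.span 𝔽 (φ '' I) := by
    refine le_antisymm (Submodule.span_le.2 ?_) (Submodule.span_mono (image_mono hI.subset))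
    rintro _ ⟨x, hx, rfl⟩
    rw [SetLike.mem_coe, ← hφ.mem_closure_iff_of_indep hI.indep (hX hx), hI.closure_eq_closure]
    exact M.mem_closure_of_mem hx
  rw [← hI.closure_eq_closure, hspan, hφ.mem_closure_iff_of_indep hI.indep he]

end Representation

section Binary

variable {V : Type*} [AddCommGroup V] [Module (ZMod 2) V] {φ : α → V}

lemma IsRep.sum_eq_zero_of_isCircuit (hφ : IsRep (ZMod 2) M φ) (hC : M.IsCircuit C)
    (hfin : C.Finite) : ∑ x ∈ hfin.toFinset, φ x = 0 := by
  have hdep : ¬ LinearIndepOn (ZMod 2) φ C := by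
    rw [← hφ C hC.subset_ground]
    exact hC.not_indep
  obtain ⟨t, htC, ht0, htne⟩ : ∃ t : Finset α, ↑t ⊆ C ∧ ∑ x ∈ t, φ x = 0 ∧ t ≠ ∅ := by
    simpa [linearIndepOn_zmod_two_iff] using hdep
  have ht : ¬ M.Indep t := by
    rw [hφ t (htC.trans hC.subset_ground), linearIndepOn_zmod_two_iff]
    exact fun h ↦ htne (h t subset_rfl ht0)
  rwa [← Finset.coe_inj.1 ((hC.eq_of_not_indep_subset ht htC).trans hfin.coe_toFinset.symm)]

lemma IsRep.even_ncard_inter_of_isCircuit_of_isCocircuit (hφ : IsRep (ZMod 2) M φ)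
    (hC : M.IsCircuit C) (hK : M.IsCocircuit K) (hfin : C.Finite) : Even (C ∩ K).ncard := by
  classical
  set q := (Submodule.span (ZMod 2) (φ '' (M.E \ K))).mkQ
  have hq_eq_zero : ∀ x ∈ M.E, (q (φ x) = 0 ↔ x ∈ M.closure (M.E \ K)) := fun x hx ↦ by
    rw [hφ.mem_closure_iff sdiff_subset hx, Submodule.mkQ_apply, Submodule.Quotient.mk_eq_zero]
  have hq_ne_zero : ∀ e ∈ K, q (φ e) ≠ 0 := fun e he h ↦
    hK.notMem_closure_compl he ((hq_eq_zero e (hK.subset_ground he)).1 h)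
  have hq_const : ∀ e ∈ K, ∀ f ∈ K, q (φ f) = q (φ e) := fun e he f hf ↦ by
    have hf' : f ∈ M.closure (insert e (M.E \ K)) := by
      rw [(hK.spanning_insert_compl he).closure_eq]
      exact hK.subset_ground hf
    rw [hφ.mem_closure_iff (insert_subset (hK.subset_ground he) sdiff_subset)
      (hK.subset_ground hf), image_insert_eq, Submodule.mem_span_insert] at hf'
    obtain ⟨a, z, hz, hfz⟩ := hf'
    have hqz : q z = 0 := by rwa [Submodule.mkQ_apply, Submodule.Quotient.mk_eq_zero]
    have hqf : q (φ f) = a • q (φ e) := by rw [hfz, map_add, map_smul, hqz, add_zero]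
    obtain rfl | rfl := zmod_two_eq_zero_or_eq_one a
    · exact absurd (by rw [hqf, zero_smul]) (hq_ne_zero f hf)
    · rwa [one_smul] at hqf
  obtain hCK | ⟨e, heC, heK⟩ := (C ∩ K).eq_empty_or_nonempty
  · simp [hCK]
  have hsum : (C ∩ K).ncard • q (φ e) = 0 := by
    rw [← map_zero q, ← hφ.sum_eq_zero_of_isCircuit hC hfin, map_sum,
      ← Finset.sum_filter_of_ne (p := (· ∈ K)), ncard_eq_toFinset_card _ (hfin.inter_of_left K),
      ← Finset.sum_const]
    · refine Finset.sum_congr (by ext; simp) fun f hf ↦ ?_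
      exact (hq_const e heK f (Finset.mem_filter.1 hf).2).symm
    · intro x hx hqx
      by_contra hxK
      exact hqx ((hq_eq_zero x (hC.subset_ground (hfin.mem_toFinset.1 hx))).2
        (M.mem_closure_of_mem ⟨hC.subset_ground (hfin.mem_toFinset.1 hx), hxK⟩))
  rw [← Nat.cast_smul_eq_nsmul (ZMod 2), smul_eq_zero, ZMod.natCast_eq_zero_iff_even] at hsum
  exact hsum.resolve_right (hq_ne_zero e heK)

lemma IsRep.ncard_inter_eq_two_of_isTriangle (hφ : IsRep (ZMod 2) M φ) (hT : IsTriangle M T)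
    (hK : M.IsCocircuit K) (hne : (T ∩ K).Nonempty) : (T ∩ K).ncard = 2 := by
  obtain ⟨hTC, hT3⟩ := hT
  have hTfin : T.Finite := finite_of_encard_eq_coe hT3
  have hle : (T ∩ K).ncard ≤ 3 :=
    (ncard_le_ncard inter_subset_left hTfin).trans_eq (by rw [ncard_def, hT3]; rfl)
  have hpos : 0 < (T ∩ K).ncard := (ncard_pos (hTfin.inter_of_left K)).2 hne
  obtain ⟨k, hk⟩ :=
    hφ.even_ncard_inter_of_isCircuit_of_isCocircuit (circuit_iff_isCircuit.1 hTC) hK hTfin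
  omega

end Binary

theorem stmt3_general (M : Matroid α) (hB : Binary M)
    (h3 : EveryElementInThreeTriangles M) :
    ∀ C, Cocircuit M C → ¬ Odd C.ncard := by
  intro K hK hodd
  rw [cocircuit_iff_isCocircuit] at hK
  obtain ⟨φ, hφ⟩ : ∃ φ : α → (α →₀ ZMod 2), IsRep (ZMod 2) M φ := hB
  have hcount := ncard_mul_eq_ncard_mul_of_forall (m := 3) (n := 2) (finite_of_ncard_pos hodd.pos)
    (fun e he ↦ h3 e (hK.subset_ground he))
    (fun T hT hne ↦ hφ.ncard_inter_eq_two_of_isTriangle hT hK hne)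
  rw [Nat.odd_iff] at hodd
  omega

theorem stmt3 (M : Matroid α) (hI4 : InternallyFourConnected M) (hB : Binary M)
    (h3 : EveryElementInThreeTriangles M) :
    ∀ C, Cocircuit M C → ¬ Odd C.ncard :=
  stmt3_general M hB h3

end Paper
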